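/- arXiv:math/0702627 — 6 statements merged into one kernel-verified Lean document; each statement's English description precedes it below -/
import Mathlib

section
/- Let G be a connected Δ-regular graph on n vertices and e an edge of G such that G \ e (G with edge e removed) is connected. Then 2/n > Δ − λ₁(G \ e) > 1/(nD), where D is the diameter of G \ e and λ₁ denotes the largest adjacency eigenvalue. -/
open SimpleGraph Finset Matrix

set_option maxHeartbeats 1600000

private lemma walk_cs' {V : Type*} {H : SimpleGraph V} (y : V → ℝ) {u v : V} (W : H.Walk u v) :
    (y u - y v)^2 ≤ W.length * ((W.darts.map (fun d => (y d.toProd.1 - y d.toProd.2)^2)).sum) := by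
  induction W with
  | nil => simp
  | @cons a b c h W ih =>
    simp only [Walk.length_cons, Walk.darts_cons, List.map_cons, List.sum_cons]
    have hsum : 0 ≤ ((W.darts.map (fun d => (y d.toProd.1 - y d.toProd.2)^2)).sum) := by
      apply List.sum_nonneg
      intro x hx
      simp only [List.mem_map] at hx
      obtain ⟨d, _, rfl⟩ := hx
      positivity
    rcases Nat.eq_zero_or_pos W.length with h0 | hpos
    · have hb : y b - y c = 0 := by
        have := ih
        rw [h0] at this
        push_cast at this
        nlinarith [sq_nonneg (y b - y c)]
      push_cast [h0] at ih ⊢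
      nlinarith [sq_nonneg (y a - y b)]
    · have hL : (1:ℝ) ≤ W.length := by exact_mod_cast hpos
      push_cast
      nlinarith [sq_nonneg ((W.length:ℝ) * (y a - y b) - (y b - y c)), ih,
        mul_nonneg (sub_nonneg.2 hL) hsum]

private lemma mini' {J K a b T Z : ℝ} (hJ : 0 < J) (hK : 0 < K)
    (h1 : a^2 ≤ J * T) (h2 : b^2 ≤ K * Z) : (a + b)^2 ≤ (J + K) * (T + Z) := by
  nlinarith [sq_nonneg (K*a - J*b), mul_le_mul_of_nonneg_left h1 (le_of_lt hK),
    mul_le_mul_of_nonneg_left h2 (le_of_lt hJ), mul_pos hJ hK, sq_nonneg (a+b),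
    mul_le_mul_of_nonneg_left h1 (le_of_lt hJ), mul_le_mul_of_nonneg_left h2 (le_of_lt hK)]

private lemma stepU' {p T t b : ℝ} (hp : 0 ≤ p) (hT : 0 ≤ T) (h2 : (b - t)^2 ≤ p * T)
    (hcase : p = 0 ∨ 1 ≤ p) : b^2 ≤ (p+1) * (T + t^2) := by
  rcases hcase with h0 | h1
  · subst h0
    have : b = t := by nlinarith [sq_nonneg (b - t)]
    subst this
    nlinarith
  · have hpp : 0 < p := by linarith
    nlinarith [sq_nonneg (b - (p+1)*t), mul_le_mul_of_nonneg_left h2 (by linarith : (0:ℝ) ≤ p+1),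
      mul_nonneg hp hT]

private lemma alg' (D j p q : ℕ) (T1 T2 T3 t s b X : ℝ)
    (hT1 : 0 ≤ T1) (hT2 : 0 ≤ T2) (hT3 : 0 ≤ T3)
    (h1 : (X - b)^2 ≤ j * T1) (h2 : (b - t)^2 ≤ p * T2) (h3 : (b - s)^2 ≤ q * T3)
    (hjp : j + p ≤ D) (hjq : j + q ≤ D) (hpq : 1 ≤ p + q) :
    X^2 ≤ D * (T1 + (T2 + t^2) + (T3 + s^2)) := by
  set U : ℝ := T2 + t^2 with hU
  set W : ℝ := T3 + s^2 with hW
  have hU0 : 0 ≤ U := by positivity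
  have hW0 : 0 ≤ W := by positivity
  have hbU : b^2 ≤ ((p:ℝ)+1) * U := by
    apply stepU' (by positivity) hT2 h2
    rcases Nat.eq_zero_or_pos p with h | h
    · left; rw [h]; norm_num
    · right; exact_mod_cast h
  have hbW : b^2 ≤ ((q:ℝ)+1) * W := by
    apply stepU' (by positivity) hT3 h3
    rcases Nat.eq_zero_or_pos q with h | h
    · left; rw [h]; norm_num
    · right; exact_mod_cast h
  set K : ℝ := ((p:ℝ)+1) * ((q:ℝ)+1) / ((p:ℝ)+(q:ℝ)+2) with hKdef
  have hppos : (0:ℝ) < (p:ℝ)+1 := by positivity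
  have hqpos : (0:ℝ) < (q:ℝ)+1 := by positivity
  have hden : (0:ℝ) < (p:ℝ)+(q:ℝ)+2 := by positivity
  have hKpos : 0 < K := by positivity
  have hbK : b^2 ≤ K * (U + W) := by
    rw [hKdef, div_mul_eq_mul_div, le_div_iff₀ hden]
    nlinarith [mul_le_mul_of_nonneg_left hbU (le_of_lt hqpos),
      mul_le_mul_of_nonneg_left hbW (le_of_lt hppos)]
  have hKD : (j:ℝ) + K ≤ (D:ℝ) := by
    rcases le_total p q with hle | hle
    · have hq1 : 1 ≤ q := by omega
      have hKq : K ≤ (q:ℝ) := by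
        rw [hKdef, div_le_iff₀ hden]
        have h1' : (1:ℝ) ≤ (q:ℝ) := by exact_mod_cast hq1
        have hpq' : (p:ℝ) ≤ (q:ℝ) := by exact_mod_cast hle
        nlinarith
      have : (j:ℝ) + (q:ℝ) ≤ (D:ℝ) := by exact_mod_cast hjq
      linarith
    · have hp1 : 1 ≤ p := by omega
      have hKp : K ≤ (p:ℝ) := by
        rw [hKdef, div_le_iff₀ hden]
        have h1' : (1:ℝ) ≤ (p:ℝ) := by exact_mod_cast hp1
        have hpq' : (q:ℝ) ≤ (p:ℝ) := by exact_mod_cast hle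
        nlinarith
      have : (j:ℝ) + (p:ℝ) ≤ (D:ℝ) := by exact_mod_cast hjp
      linarith
  rcases Nat.eq_zero_or_pos j with hj0 | hjpos
  · have hXb : X = b := by
      rw [hj0] at h1
      push_cast at h1
      nlinarith [sq_nonneg (X - b)]
    have hKD' : K ≤ (D:ℝ) := by
      rw [hj0] at hKD; push_cast at hKD; linarith
    have hD0 : (0:ℝ) ≤ (D:ℝ) := by positivity
    have c1 : X^2 ≤ K * (U + W) := by rw [hXb]; exact hbK
    have c2 : K * (U + W) ≤ (D:ℝ) * (U + W) :=
      mul_le_mul_of_nonneg_right hKD' (by linarith)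
    have c3 : (D:ℝ) * (U + W) ≤ (D:ℝ) * (T1 + U + W) := by nlinarith
    linarith
  · have hjposR : (0:ℝ) < (j:ℝ) := by exact_mod_cast hjpos
    have key : X^2 ≤ ((j:ℝ) + K) * (T1 + (U + W)) := by
      have h' := mini' hjposR hKpos h1 hbK
      calc X^2 = ((X - b) + b)^2 := by ring_nf
        _ ≤ ((j:ℝ) + K) * (T1 + (U + W)) := h'
    have hsum0 : 0 ≤ T1 + (U + W) := by linarith
    calc X^2 ≤ ((j:ℝ) + K) * (T1 + (U + W)) := key
      _ ≤ (D:ℝ) * (T1 + (U + W)) := mul_le_mul_of_nonneg_right hKD hsum0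
      _ = (D:ℝ) * (T1 + U + W) := by ring

private lemma rayleigh_le' {V : Type*} [Fintype V] [DecidableEq V] (A : Matrix V V ℝ)
    (hA : A.IsHermitian) (μ : ℝ)
    (hmax : ∀ ν : ℝ, Module.End.HasEigenvalue (Matrix.toLin' A) ν → ν ≤ μ) (z : V → ℝ) :
    z ⬝ᵥ A *ᵥ z ≤ μ * (z ⬝ᵥ z) := by
  classical
  have heig : ∀ i, hA.eigenvalues i ≤ μ := by
    intro i
    apply hmax
    apply Module.End.hasEigenvalue_of_hasEigenvector (x := ⇑(hA.eigenvectorBasis i))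
    constructor
    · rw [Module.End.mem_eigenspace_iff, Matrix.toLin'_apply, hA.mulVec_eigenvectorBasis]
    · intro h0
      apply hA.eigenvectorBasis.orthonormal.ne_zero i
      apply PiLp.ext
      intro j
      exact congrFun h0 j
  have hstar : star (hA.eigenvectorUnitary : Matrix V V ℝ)
      = (hA.eigenvectorUnitary : Matrix V V ℝ)ᵀ := by
    rw [Matrix.star_eq_conjTranspose, Matrix.conjTranspose_eq_transpose_of_trivial]
  have hU1 : (hA.eigenvectorUnitary : Matrix V V ℝ)
      * (hA.eigenvectorUnitary : Matrix V V ℝ)ᵀ = 1 := by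
    rw [← hstar]
    exact (Matrix.mem_unitaryGroup_iff).mp hA.eigenvectorUnitary.2
  have main : ∀ w : V → ℝ,
      w ⬝ᵥ (Matrix.diagonal hA.eigenvalues *ᵥ w) ≤ μ * (w ⬝ᵥ w) := by
    intro w
    have h1 : w ⬝ᵥ (Matrix.diagonal hA.eigenvalues *ᵥ w) = ∑ i, hA.eigenvalues i * (w i)^2 := by
      simp only [dotProduct, Matrix.mulVec_diagonal]
      congr 1
      funext i
      ring
    have h2 : w ⬝ᵥ w = ∑ i, (w i)^2 := by
      simp only [dotProduct]
      congr 1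
      funext i
      ring
    rw [h1, h2, Finset.mul_sum]
    exact Finset.sum_le_sum fun i _ => mul_le_mul_of_nonneg_right (heig i) (sq_nonneg _)
  have hww : ((hA.eigenvectorUnitary : Matrix V V ℝ)ᵀ *ᵥ z)
      ⬝ᵥ ((hA.eigenvectorUnitary : Matrix V V ℝ)ᵀ *ᵥ z) = z ⬝ᵥ z := by
    rw [Matrix.dotProduct_mulVec, Matrix.vecMul_transpose, Matrix.mulVec_mulVec, hU1,
      Matrix.one_mulVec]
  have hdot : z ⬝ᵥ A *ᵥ z = ((hA.eigenvectorUnitary : Matrix V V ℝ)ᵀ *ᵥ z)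
      ⬝ᵥ (Matrix.diagonal hA.eigenvalues *ᵥ ((hA.eigenvectorUnitary : Matrix V V ℝ)ᵀ *ᵥ z)) := by
    conv_lhs => rw [hA.spectral_theorem]
    rw [Unitary.conjStarAlgAut_apply, RCLike.ofReal_real_eq_id, hstar, ← Matrix.mulVec_mulVec, ← Matrix.mulVec_mulVec,
      Matrix.dotProduct_mulVec, ← Matrix.mulVec_transpose]
    simp only [Function.comp_def, id]
  rw [hdot, ← hww]
  exact main _

/-- If `G` is a connected `Δ`-regular graph on `n` vertices and `e` an edge of `G` such that
`G \ e` is connected, then `2/n > Δ − λ₁(G \ e) > 1/(nD)` where `D` is the diameter of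
`G \ e`. -/
theorem stmt4 {V : Type*} [Fintype V] [DecidableEq V]
    (G : SimpleGraph V) [DecidableRel G.Adj] (Δ : ℕ) (hreg : G.IsRegularOfDegree Δ)
    (e : Sym2 V) (he : e ∈ G.edgeSet)
    (H : SimpleGraph V) (hH : H = G.deleteEdges {e}) [DecidableRel H.Adj]
    (hHconn : H.Connected)
    (μ : ℝ)
    (hμ : Module.End.HasEigenvalue (Matrix.toLin' (H.adjMatrix ℝ)) μ)
    (hμmax : ∀ ν : ℝ, Module.End.HasEigenvalue (Matrix.toLin' (H.adjMatrix ℝ)) ν → ν ≤ μ) :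
    2 / (Fintype.card V : ℝ) > (Δ : ℝ) - μ ∧ (Δ : ℝ) - μ > 1 / (Fintype.card V * H.diam) := by
  classical
  obtain ⟨⟨α, β⟩, hab⟩ := Quot.exists_rep e
  have hab : e = s(α, β) := hab.symm
  have hGadj : G.Adj α β := by rw [hab] at he; exact he
  have hαβ : α ≠ β := hGadj.ne
  -- adjacency of H
  have hHadj : ∀ u v : V, H.Adj u v ↔ (G.Adj u v ∧ ¬ s(u,v) = s(α,β)) := by
    intro u v
    rw [hH, hab]
    simp [SimpleGraph.deleteEdges_adj]
  have hHnadj : ¬ H.Adj α β := by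
    rw [hHadj]
    simp
  -- degrees of H
  have hΔ1 : 1 ≤ Δ := by
    have h1 : β ∈ G.neighborFinset α := (SimpleGraph.mem_neighborFinset G α β).mpr hGadj
    have h2 : 0 < G.degree α := Finset.card_pos.mpr ⟨β, h1⟩
    rw [hreg α] at h2
    omega
  have hnbrα : H.neighborFinset α = (G.neighborFinset α).erase β := by
    ext u
    simp only [SimpleGraph.mem_neighborFinset, Finset.mem_erase, hHadj]
    constructor
    · rintro ⟨h1, h2⟩
      refine ⟨?_, h1⟩
      rintro rfl
      exact h2 rfl
    · rintro ⟨h1, h2⟩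
      refine ⟨h2, ?_⟩
      intro hc
      rcases Sym2.eq_iff.mp hc with ⟨-, rfl⟩ | ⟨rfl, rfl⟩
      · exact h1 rfl
      · exact h1 rfl
  have hnbrβ : H.neighborFinset β = (G.neighborFinset β).erase α := by
    ext u
    simp only [SimpleGraph.mem_neighborFinset, Finset.mem_erase, hHadj]
    constructor
    · rintro ⟨h1, h2⟩
      refine ⟨?_, h1⟩
      rintro rfl
      exact h2 (Sym2.eq_swap)
    · rintro ⟨h1, h2⟩
      refine ⟨h2, ?_⟩
      intro hc
      rcases Sym2.eq_iff.mp hc with ⟨h3, h4⟩ | ⟨h3, h4⟩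
      · exact hαβ h3.symm
      · exact h1 h4
  have hdegα : H.degree α = Δ - 1 := by
    rw [SimpleGraph.degree, hnbrα, Finset.card_erase_of_mem
      ((SimpleGraph.mem_neighborFinset G α β).mpr hGadj)]
    rw [← SimpleGraph.degree, hreg α]
  have hdegβ : H.degree β = Δ - 1 := by
    rw [SimpleGraph.degree, hnbrβ, Finset.card_erase_of_mem
      ((SimpleGraph.mem_neighborFinset G β α).mpr hGadj.symm)]
    rw [← SimpleGraph.degree, hreg β]
  have hdegother : ∀ v, v ≠ α → v ≠ β → H.degree v = Δ := by
    intro v h1 h2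
    have : H.neighborFinset v = G.neighborFinset v := by
      ext u
      simp only [SimpleGraph.mem_neighborFinset, hHadj]
      constructor
      · exact fun h => h.1
      · intro h
        refine ⟨h, ?_⟩
        intro hc
        rcases Sym2.eq_iff.mp hc with ⟨h3, h4⟩ | ⟨h3, h4⟩
        · exact h1 h3
        · exact h2 h3
    rw [SimpleGraph.degree, this, ← SimpleGraph.degree, hreg v]
  have degR : ∀ v, (H.degree v : ℝ)
      = (Δ:ℝ) - ((if v = α then (1:ℝ) else 0) + (if v = β then (1:ℝ) else 0)) := by
    intro v
    by_cases h1 : v = α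
    · subst h1
      rw [hdegα, if_pos rfl, if_neg hαβ]
      push_cast [hΔ1]
      ring
    · by_cases h2 : v = β
      · subst h2
        rw [hdegβ, if_neg h1, if_pos rfl]
        push_cast [hΔ1]
        ring
      · rw [hdegother v h1 h2, if_neg h1, if_neg h2]
        ring
  -- a third vertex
  have hγex : ∃ γ : V, γ ≠ α ∧ γ ≠ β := by
    by_contra hc
    push_neg at hc
    obtain ⟨W⟩ := hHconn.preconnected α β
    cases W with
    | nil => exact hαβ rfl
    | cons h W' =>
      rename_i u
      have hu : u = α ∨ u = β := by
        by_cases h1 : u = α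
        · exact Or.inl h1
        · exact Or.inr (hc u h1)
      rcases hu with h1 | h1
      · subst h1; exact H.irrefl h
      · subst h1; exact hHnadj h
  obtain ⟨γ, hγα, hγβ⟩ := hγex
  have hn3 : 3 ≤ Fintype.card V := by
    have hsub : ({α, β, γ} : Finset V) ⊆ Finset.univ := Finset.subset_univ _
    have hcard : ({α, β, γ} : Finset V).card = 3 := by
      rw [Finset.card_insert_of_notMem (by simp [hαβ, hγα.symm, hγβ.symm]),
        Finset.card_insert_of_notMem (by simp [hγβ.symm]), Finset.card_singleton]
    calc 3 = ({α, β, γ} : Finset V).card := hcard.symm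
      _ ≤ Finset.univ.card := Finset.card_le_card hsub
      _ = Fintype.card V := rfl
  set n : ℕ := Fintype.card V with hn
  have hn0 : (0:ℝ) < n := by
    have : 0 < n := by omega
    exact_mod_cast this
  set PP : Finset (V × V) := Finset.univ.filter (fun p : V × V => H.Adj p.1 p.2) with hPP
  have hinner : ∀ (u : V) (g : V → ℝ),
      (∑ v, if H.Adj u v then g u else 0) = (H.degree u : ℝ) * g u := by
    intro u g
    have h1 : (∑ v, if H.Adj u v then g u else 0)
        = ∑ v, if v ∈ H.neighborFinset u then g u else 0 := by
      apply Finset.sum_congr rfl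
      intro v _
      by_cases h : H.Adj u v
      · rw [if_pos h, if_pos ((SimpleGraph.mem_neighborFinset H u v).mpr h)]
      · rw [if_neg h, if_neg (fun hc => h ((SimpleGraph.mem_neighborFinset H u v).mp hc))]
    rw [h1, Finset.sum_ite_mem, Finset.univ_inter, Finset.sum_const, nsmul_eq_mul,
      SimpleGraph.degree]
  have S1 : ∀ f : V → ℝ, (∑ p ∈ PP, f p.1) = ∑ v, (H.degree v : ℝ) * f v := by
    intro f
    rw [hPP, Finset.sum_filter, Fintype.sum_prod_type]
    exact Finset.sum_congr rfl fun u _ => hinner u f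
  have hswap : ∀ p : V × V, p ∈ PP → Prod.swap p ∈ PP := by
    intro p hp
    rw [hPP, Finset.mem_filter] at hp ⊢
    exact ⟨Finset.mem_univ _, hp.2.symm⟩
  have S2 : ∀ f : V → ℝ, (∑ p ∈ PP, f p.2) = ∑ v, (H.degree v : ℝ) * f v := by
    intro f
    rw [← S1 f]
    exact Finset.sum_nbij' Prod.swap Prod.swap hswap hswap
      (fun p _ => Prod.swap_swap p) (fun p _ => Prod.swap_swap p) (fun p _ => rfl)
  have F1 : ∀ z : V → ℝ, z ⬝ᵥ (H.adjMatrix ℝ) *ᵥ z = ∑ p ∈ PP, z p.1 * z p.2 := by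
    intro z
    rw [SimpleGraph.dotProduct_mulVec_adjMatrix, hPP, Finset.sum_filter, Fintype.sum_prod_type]
  have sumdeg : (∑ v, (H.degree v : ℝ)) = n * Δ - 2 := by
    have h1 : (∑ v, (H.degree v : ℝ))
        = ∑ v, ((Δ:ℝ) - ((if v = α then (1:ℝ) else 0) + (if v = β then (1:ℝ) else 0))) :=
      Finset.sum_congr rfl fun v _ => degR v
    rw [h1, Finset.sum_sub_distrib, Finset.sum_add_distrib, Finset.sum_const,
      Finset.sum_ite_eq' Finset.univ α (fun _ => (1:ℝ)),
      Finset.sum_ite_eq' Finset.univ β (fun _ => (1:ℝ)), if_pos (Finset.mem_univ _),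
      if_pos (Finset.mem_univ _), nsmul_eq_mul, Finset.card_univ, ← hn]
    ring
  -- Rayleigh upper bound machinery
  have hHerm : (H.adjMatrix ℝ).IsHermitian := by
    rw [Matrix.IsHermitian, Matrix.conjTranspose_eq_transpose_of_trivial]
    exact (SimpleGraph.isSymm_adjMatrix H)
  have K1 : ∀ z : V → ℝ, z ⬝ᵥ (H.adjMatrix ℝ) *ᵥ z ≤ μ * (z ⬝ᵥ z) :=
    rayleigh_le' _ hHerm μ hμmax
  -- test vector for the upper bound
  have hnΔ2 : (0:ℝ) < n * Δ - 2 := by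
    have h1 : (3:ℝ) ≤ (n:ℝ) := by exact_mod_cast hn3
    have h2 : (1:ℝ) ≤ (Δ:ℝ) := by exact_mod_cast hΔ1
    nlinarith
  set ε : ℝ := 2 / ((n:ℝ) * Δ - 2) with hεdef
  have hεpos : 0 < ε := by rw [hεdef]; positivity
  have hεid : ε * ((n:ℝ) * Δ - 2) = 2 := div_mul_cancel₀ 2 hnΔ2.ne'
  set d : V → ℝ := fun v => if v = γ then (1:ℝ) else 0 with hd
  have hiteq : ∀ v, d v * d v = d v := by
    intro v
    rw [hd]
    by_cases h : v = γ <;> simp [h]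
  set z : V → ℝ := fun v => 1 + ε * d v with hzdef
  have hd2 : ∑ p ∈ PP, d p.1 * d p.2 = 0 := by
    apply Finset.sum_eq_zero
    intro p hp
    rw [hPP, Finset.mem_filter] at hp
    by_cases h1 : p.1 = γ
    · by_cases h2 : p.2 = γ
      · exfalso
        have := hp.2
        rw [h1, h2] at this
        exact H.irrefl this
      · rw [hd]
        simp [h2]
    · rw [hd]
      simp [h1]
  have hsd : ∑ v, (H.degree v : ℝ) * d v = Δ := by
    have h1 : ∀ v, (H.degree v : ℝ) * d v = if v = γ then (H.degree v : ℝ) else 0 := by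
      intro v
      rw [hd]
      by_cases h : v = γ <;> simp [h]
    rw [Finset.sum_congr rfl fun v _ => h1 v,
      Finset.sum_ite_eq' Finset.univ γ (fun v => (H.degree v : ℝ)), if_pos (Finset.mem_univ _),
      hdegother γ hγα hγβ]
  have hsd1 : ∑ v, d v = 1 := by
    rw [hd, Finset.sum_ite_eq' Finset.univ γ (fun _ => (1:ℝ)), if_pos (Finset.mem_univ _)]
  have e1 : ∑ p ∈ PP, (1:ℝ) = (n:ℝ) * Δ - 2 := by
    have h := S1 (fun _ => (1:ℝ))
    simp only [mul_one] at h
    rw [h, sumdeg]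
  have e2 : ∑ p ∈ PP, d p.1 = (Δ:ℝ) := by rw [S1 d, hsd]
  have e3 : ∑ p ∈ PP, d p.2 = (Δ:ℝ) := by rw [S2 d, hsd]
  have hzAz : z ⬝ᵥ (H.adjMatrix ℝ) *ᵥ z = ((n:ℝ) * Δ - 2) + 2*ε*Δ := by
    rw [F1 z]
    have hexp : ∀ p : V × V, z p.1 * z p.2
        = 1 + ε * d p.1 + ε * d p.2 + (ε * ε) * (d p.1 * d p.2) := by
      intro p
      rw [hzdef]
      ring
    rw [Finset.sum_congr rfl fun p _ => hexp p, Finset.sum_add_distrib, Finset.sum_add_distrib,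
      Finset.sum_add_distrib, ← Finset.mul_sum, ← Finset.mul_sum, ← Finset.mul_sum,
      e1, e2, e3, hd2]
    ring
  have hzz : z ⬝ᵥ z = (n:ℝ) + 2*ε + ε^2 := by
    have hexp2 : ∀ v, z v * z v = 1 + (2*ε + ε^2) * d v := by
      intro v
      have h := hiteq v
      show (1 + ε * d v) * (1 + ε * d v) = 1 + (2*ε + ε^2) * d v
      linear_combination (ε^2) * h
    rw [dotProduct]
    rw [Finset.sum_congr rfl fun v _ => hexp2 v, Finset.sum_add_distrib, ← Finset.mul_sum,
      hsd1, Finset.sum_const, Finset.card_univ, nsmul_eq_mul, ← hn]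
    ring
  have part1 : (Δ:ℝ) - μ < 2 / n := by
    have hK := K1 z
    rw [hzAz, hzz] at hK
    have hQpos : (0:ℝ) < (n:ℝ) + 2*ε + ε^2 := by positivity
    have hkey : ((n:ℝ)*Δ - 2) * ((n:ℝ) + 2*ε + ε^2) < (((n:ℝ)*Δ - 2) + 2*ε*Δ) * (n:ℝ) := by
      have hc : ε^2 * ((n:ℝ)*Δ) = 2*ε + 2*ε^2 := by nlinarith [hεid]
      nlinarith [hεpos, hn0]
    have hμn : ((n:ℝ)*Δ - 2) < μ * n := by
      have h1 : (((n:ℝ)*Δ - 2) + 2*ε*Δ) * (n:ℝ) ≤ (μ * ((n:ℝ) + 2*ε + ε^2)) * n :=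
        mul_le_mul_of_nonneg_right hK (le_of_lt hn0)
      have h2 : ((n:ℝ)*Δ - 2) * ((n:ℝ) + 2*ε + ε^2) < (μ * n) * ((n:ℝ) + 2*ε + ε^2) := by
        calc ((n:ℝ)*Δ - 2) * ((n:ℝ) + 2*ε + ε^2) < (((n:ℝ)*Δ - 2) + 2*ε*Δ) * (n:ℝ) := hkey
          _ ≤ (μ * ((n:ℝ) + 2*ε + ε^2)) * n := h1
          _ = (μ * n) * ((n:ℝ) + 2*ε + ε^2) := by ring
      exact lt_of_mul_lt_mul_right h2 (le_of_lt hQpos)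
    rw [lt_div_iff₀ hn0]
    nlinarith [hμn]
  -- normalized nonnegative eigenvector
  obtain ⟨x, hx⟩ := hμ.exists_hasEigenvector
  have hmulvec : (H.adjMatrix ℝ) *ᵥ x = μ • x := by
    have h := Module.End.mem_eigenspace_iff.mp hx.1
    rwa [Matrix.toLin'_apply] at h
  set S : ℝ := ∑ v, (x v)^2 with hSdef
  have hSpos : 0 < S := by
    obtain ⟨v0, hv0⟩ := Function.ne_iff.mp hx.2
    exact Finset.sum_pos' (fun v _ => sq_nonneg _)
      ⟨v0, Finset.mem_univ _, pow_two_pos_of_ne_zero hv0⟩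
  set y : V → ℝ := fun v => |x v| / Real.sqrt S with hydef
  have hy0 : ∀ v, 0 ≤ y v := by
    intro v
    show 0 ≤ |x v| / Real.sqrt S
    positivity
  have hsq : ∀ v, (y v)^2 = (x v)^2 / S := by
    intro v
    show (|x v| / Real.sqrt S)^2 = (x v)^2 / S
    rw [div_pow, sq_abs, Real.sq_sqrt hSpos.le]
  have hy2 : ∑ v, (y v)^2 = 1 := by
    rw [Finset.sum_congr rfl fun v _ => hsq v, ← Finset.sum_div, ← hSdef, div_self hSpos.ne']
  have hxAx : x ⬝ᵥ (H.adjMatrix ℝ) *ᵥ x = μ * S := by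
    rw [hmulvec, dotProduct_smul, smul_eq_mul]
    congr 1
    rw [dotProduct, hSdef]
    exact Finset.sum_congr rfl fun v _ => by ring
  have hyAyge : μ ≤ ∑ p ∈ PP, y p.1 * y p.2 := by
    have e1' : ∀ p : V × V, y p.1 * y p.2 = |x p.1| * |x p.2| / S := by
      intro p
      show (|x p.1| / Real.sqrt S) * (|x p.2| / Real.sqrt S) = _
      rw [div_mul_div_comm, Real.mul_self_sqrt hSpos.le]
    have e2' : ∑ p ∈ PP, x p.1 * x p.2 ≤ ∑ p ∈ PP, |x p.1| * |x p.2| :=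
      Finset.sum_le_sum fun p _ => by rw [← abs_mul]; exact le_abs_self _
    have e3' : ∑ p ∈ PP, x p.1 * x p.2 = μ * S := by rw [← F1 x, hxAx]
    rw [Finset.sum_congr rfl fun p _ => e1' p, ← Finset.sum_div, le_div_iff₀ hSpos]
    calc μ * S = ∑ p ∈ PP, x p.1 * x p.2 := e3'.symm
      _ ≤ ∑ p ∈ PP, |x p.1| * |x p.2| := e2'
  -- the master inequality
  set Q2 : ℝ := ∑ p ∈ PP, (y p.1 - y p.2)^2 with hQ2def
  have master : (y α)^2 + (y β)^2 + (1/2) * Q2 ≤ (Δ:ℝ) - μ := by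
    have hID : (∑ v, ((Δ:ℝ) - (H.degree v)) * (y v)^2) + (1/2) * Q2
        = (Δ:ℝ) - ∑ p ∈ PP, y p.1 * y p.2 := by
      have q1 : ∀ p : V × V, (y p.1 - y p.2)^2
          = (y p.1)^2 + (y p.2)^2 - 2 * (y p.1 * y p.2) := fun p => by ring
      have q2 : Q2 = (∑ p ∈ PP, (y p.1)^2) + (∑ p ∈ PP, (y p.2)^2)
          - 2 * ∑ p ∈ PP, y p.1 * y p.2 := by
        rw [hQ2def, Finset.sum_congr rfl fun p _ => q1 p, Finset.sum_sub_distrib,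
          Finset.sum_add_distrib, ← Finset.mul_sum]
      have q3 : ∑ p ∈ PP, (y p.1)^2 = ∑ v, (H.degree v : ℝ) * (y v)^2 :=
        S1 (fun v => (y v)^2)
      have q4 : ∑ p ∈ PP, (y p.2)^2 = ∑ v, (H.degree v : ℝ) * (y v)^2 :=
        S2 (fun v => (y v)^2)
      have q5 : ∑ v, ((Δ:ℝ) - (H.degree v)) * (y v)^2
          = (Δ:ℝ) * (∑ v, (y v)^2) - ∑ v, (H.degree v:ℝ) * (y v)^2 := by
        rw [Finset.mul_sum, ← Finset.sum_sub_distrib]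
        exact Finset.sum_congr rfl fun v _ => by ring
      rw [q2, q5, hy2, q3, q4]
      ring
    have hdegsum : ∑ v, ((Δ:ℝ) - (H.degree v)) * (y v)^2 = (y α)^2 + (y β)^2 := by
      have q1 : ∀ v, ((Δ:ℝ) - (H.degree v)) * (y v)^2
          = (if v = α then (y v)^2 else 0) + (if v = β then (y v)^2 else 0) := by
        intro v
        have hq : (Δ:ℝ) - (H.degree v)
            = (if v = α then (1:ℝ) else 0) + (if v = β then (1:ℝ) else 0) := by
          rw [degR v]; ring
        rw [hq]
        simp only [add_mul, ite_mul, one_mul, zero_mul]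
      rw [Finset.sum_congr rfl fun v _ => q1 v, Finset.sum_add_distrib,
        Finset.sum_ite_eq' Finset.univ α (fun v => (y v)^2),
        Finset.sum_ite_eq' Finset.univ β (fun v => (y v)^2), if_pos (Finset.mem_univ _),
        if_pos (Finset.mem_univ _)]
    linarith [hID, hdegsum, hyAyge]
  -- the maximal coordinate
  obtain ⟨w, -, hwm⟩ := Finset.exists_max_image Finset.univ y ⟨α, Finset.mem_univ α⟩
  have hwmax : ∀ v, y v ≤ y w := fun v => hwm v (Finset.mem_univ v)
  have hXgt : 1 / (n:ℝ) < (y w)^2 := by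
    by_contra hcon
    push_neg at hcon
    have hle : ∀ v, (y v)^2 ≤ 1/(n:ℝ) := by
      intro v
      have : (y v)^2 ≤ (y w)^2 := by nlinarith [hy0 v, hwmax v, hy0 w]
      linarith
    have hall : ∀ v, (y v)^2 = 1/(n:ℝ) := by
      by_contra hviol
      push_neg at hviol
      obtain ⟨v0, hv0⟩ := hviol
      have hsumlt : ∑ v, (y v)^2 < ∑ _v : V, 1/(n:ℝ) :=
        Finset.sum_lt_sum (fun v _ => hle v)
          ⟨v0, Finset.mem_univ _, lt_of_le_of_ne (hle v0) hv0⟩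
      rw [hy2, Finset.sum_const, Finset.card_univ, ← hn, nsmul_eq_mul, mul_one_div,
        div_self hn0.ne'] at hsumlt
      exact lt_irrefl 1 hsumlt
    have hyc : ∀ v, y v = Real.sqrt (1/(n:ℝ)) := by
      intro v
      rw [← Real.sqrt_sq (hy0 v), hall v]
    have hcard : ((PP.card : ℝ)) = (n:ℝ)*Δ - 2 := by
      rw [← e1, Finset.sum_const, nsmul_eq_mul, mul_one]
    have hcontr : ∑ p ∈ PP, y p.1 * y p.2 = ((n:ℝ)*Δ - 2) * (1/(n:ℝ)) := by
      have hpt : ∀ p : V × V, y p.1 * y p.2 = 1/(n:ℝ) := by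
        intro p
        rw [hyc p.1, hyc p.2, Real.mul_self_sqrt (by positivity)]
      rw [Finset.sum_congr rfl fun p _ => hpt p, Finset.sum_const, nsmul_eq_mul, hcard]
    have hμle : μ ≤ ((n:ℝ)*Δ - 2) * (1/(n:ℝ)) := hcontr ▸ hyAyge
    have hexp : ((n:ℝ)*Δ - 2) * (1/(n:ℝ)) = (Δ:ℝ) - 2/(n:ℝ) := by
      field_simp
    linarith [part1, hμle]
  -- diameter facts
  have hediam : H.ediam ≠ ⊤ := by
    have hne : Nonempty V := ⟨α⟩
    obtain ⟨u0, v0, huv⟩ := SimpleGraph.exists_edist_eq_ediam_of_finite (G := H)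
    rw [← huv]
    exact (SimpleGraph.edist_ne_top_iff_reachable).mpr (hHconn.preconnected u0 v0)
  have hdist_le : ∀ u v : V, H.dist u v ≤ H.diam := fun u v => SimpleGraph.dist_le_diam hediam
  have hDpos : 0 < H.diam :=
    lt_of_lt_of_le (hHconn.pos_dist_of_ne hαβ) (hdist_le α β)
  -- splitting shortest walks
  have hsplit : ∀ {u v c' : V} (W : H.Walk u v), W.length = H.dist u v →
      ∀ (hc : c' ∈ W.support),
      (W.takeUntil c' hc).length = H.dist u c' ∧ (W.dropUntil c' hc).length = H.dist c' v := by
    intro u v c' W hW hc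
    have h1 : H.dist u c' ≤ (W.takeUntil c' hc).length := SimpleGraph.dist_le _
    have h2 : H.dist c' v ≤ (W.dropUntil c' hc).length := SimpleGraph.dist_le _
    have h3 : (W.takeUntil c' hc).length + (W.dropUntil c' hc).length = W.length := by
      have h := congrArg SimpleGraph.Walk.length (SimpleGraph.Walk.take_spec W hc)
      rwa [SimpleGraph.Walk.length_append] at h
    have h4 : H.dist u v ≤ H.dist u c' + H.dist c' v := hHconn.dist_triangle
    omega
  -- shortest path from w to α
  obtain ⟨Pw, hPwlen⟩ := hHconn.exists_walk_length_eq_dist w α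
  have hPwpath : Pw.IsPath := Pw.isPath_of_length_eq_dist hPwlen
  set Cand : Finset V := Finset.univ.filter
    (fun v => v ∈ Pw.support ∧ H.dist w v + H.dist v β = H.dist w β) with hCand
  have hwCand : w ∈ Cand := by
    rw [hCand, Finset.mem_filter]
    refine ⟨Finset.mem_univ _, Pw.start_mem_support, ?_⟩
    rw [SimpleGraph.dist_self, zero_add]
  obtain ⟨c, hcC, hcmin⟩ := Finset.exists_min_image Cand (fun v => H.dist v β) ⟨w, hwCand⟩
  rw [hCand, Finset.mem_filter] at hcC
  obtain ⟨-, hcP, hceq⟩ := hcC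
  obtain ⟨R, hRlen⟩ := hHconn.exists_walk_length_eq_dist c β
  have hRpath : R.IsPath := R.isPath_of_length_eq_dist hRlen
  have hj : (Pw.takeUntil c hcP).length = H.dist w c := (hsplit Pw hPwlen hcP).1
  have hp : (Pw.dropUntil c hcP).length = H.dist c α := (hsplit Pw hPwlen hcP).2
  -- R meets Pw only in c
  have hRP : ∀ v ∈ R.support, v ∈ Pw.support → v = c := by
    intro v hvR hvP
    by_contra hne
    have h1 : (R.takeUntil v hvR).length = H.dist c v := (hsplit R hRlen hvR).1
    have h2 : (R.dropUntil v hvR).length = H.dist v β := (hsplit R hRlen hvR).2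
    have h3 : (R.takeUntil v hvR).length + (R.dropUntil v hvR).length = R.length := by
      have h := congrArg SimpleGraph.Walk.length (SimpleGraph.Walk.take_spec R hvR)
      rwa [SimpleGraph.Walk.length_append] at h
    have hpos : 1 ≤ H.dist c v := by
      rcases Nat.eq_zero_or_pos ((R.takeUntil v hvR).length) with h0 | hgt
      · exact absurd (SimpleGraph.Walk.eq_of_length_eq_zero h0).symm hne
      · omega
    have htri1 : H.dist w v ≤ H.dist w c + H.dist c v := hHconn.dist_triangle
    have htri2 : H.dist w β ≤ H.dist w v + H.dist v β := hHconn.dist_triangle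
    have hsum : H.dist c v + H.dist v β = H.dist c β := by omega
    have hvC : v ∈ Cand := by
      rw [hCand, Finset.mem_filter]
      exact ⟨Finset.mem_univ _, hvP, by omega⟩
    have hmin := hcmin v hvC
    omega
  have hRPedge : ∀ e' ∈ R.edges, e' ∉ Pw.edges := by
    have key : ∀ a b : V, s(a,b) ∈ R.edges → s(a,b) ∈ Pw.edges → False := by
      intro a b h1 h2
      have ha : a = c := hRP a (R.fst_mem_support_of_mem_edges h1)
        (Pw.fst_mem_support_of_mem_edges h2)
      have hb : b = c := hRP b (R.snd_mem_support_of_mem_edges h1)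
        (Pw.snd_mem_support_of_mem_edges h2)
      have hadj : H.Adj a b := R.edges_subset_edgeSet h1
      rw [ha, hb] at hadj
      exact H.irrefl hadj
    intro e' heR hePw
    exact Sym2.ind key e' heR hePw
  set P1 := Pw.takeUntil c hcP with hP1
  set P2 := Pw.dropUntil c hcP with hP2
  have hP1path : P1.IsPath := hPwpath.takeUntil hcP
  have hP2path : P2.IsPath := hPwpath.dropUntil hcP
  have hPwedges : P1.edges ++ P2.edges = Pw.edges := by
    rw [hP1, hP2, ← SimpleGraph.Walk.edges_append, SimpleGraph.Walk.take_spec]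
  have hnodupPw : (P1.edges ++ P2.edges).Nodup := by
    rw [hPwedges]; exact hPwpath.edges_nodup
  have htotnodup : ((P1.edges ++ P2.edges) ++ R.edges).Nodup := by
    rw [List.nodup_append]
    refine ⟨hnodupPw, hRpath.edges_nodup, ?_⟩
    intro e' he1 e'' he2 hee
    subst hee
    have hmem : e' ∈ Pw.edges := by rw [← hPwedges]; exact he1
    exact hRPedge e' he2 hmem
  -- dart lists
  set CD : List (H.Dart) := (P1.darts ++ P2.darts) ++ R.darts with hCD
  have hCDedges : CD.map SimpleGraph.Dart.edge = (P1.edges ++ P2.edges) ++ R.edges := by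
    rw [hCD]
    simp only [List.map_append]
    rfl
  have hCDmapnodup : (CD.map SimpleGraph.Dart.edge).Nodup := by rw [hCDedges]; exact htotnodup
  have hCDnodup : CD.Nodup := hCDmapnodup.of_map
  set Lfull : List (V × V) :=
    CD.map SimpleGraph.Dart.toProd ++ CD.map (fun dd => dd.symm.toProd) with hLfull
  have hfullnodup : Lfull.Nodup := by
    rw [hLfull, List.nodup_append]
    refine ⟨List.Nodup.map SimpleGraph.Dart.toProd_injective hCDnodup,
      List.Nodup.map (fun d1 d2 hdd => ?_) hCDnodup, ?_⟩
    · have h1 : d1.symm = d2.symm := SimpleGraph.Dart.toProd_injective hdd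
      have h2 := congrArg SimpleGraph.Dart.symm h1
      rwa [SimpleGraph.Dart.symm_symm, SimpleGraph.Dart.symm_symm] at h2
    · intro pr h1 pr' h2 hpp
      subst hpp
      obtain ⟨d1, hd1, rfl⟩ := List.mem_map.mp h1
      obtain ⟨d2, hd2, heq⟩ := List.mem_map.mp h2
      have h3 : d2.symm = d1 := SimpleGraph.Dart.toProd_injective heq
      have h4 : d2.edge = d1.edge := by rw [← h3, SimpleGraph.Dart.edge_symm]
      have h5 : d2 = d1 := List.inj_on_of_nodup_map hCDmapnodup hd2 hd1 h4
      rw [h5] at h3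
      exact SimpleGraph.Dart.symm_ne d1 h3
  have hmemPP : ∀ pr ∈ Lfull, pr ∈ PP := by
    intro pr hpr
    rw [hLfull, List.mem_append] at hpr
    rw [hPP, Finset.mem_filter]
    rcases hpr with h | h
    · obtain ⟨dd, _, rfl⟩ := List.mem_map.mp h
      exact ⟨Finset.mem_univ _, dd.adj⟩
    · obtain ⟨dd, _, rfl⟩ := List.mem_map.mp h
      exact ⟨Finset.mem_univ _, dd.symm.adj⟩
  set ggp : V × V → ℝ := fun pr => (y pr.1 - y pr.2)^2 with hggp
  set T1 : ℝ := (P1.darts.map (fun dd => (y dd.toProd.1 - y dd.toProd.2)^2)).sum with hT1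
  set T2 : ℝ := (P2.darts.map (fun dd => (y dd.toProd.1 - y dd.toProd.2)^2)).sum with hT2
  set T3 : ℝ := (R.darts.map (fun dd => (y dd.toProd.1 - y dd.toProd.2)^2)).sum with hT3
  have hLsum : (Lfull.map ggp).sum = 2 * (T1 + T2 + T3) := by
    rw [hLfull, List.map_append, List.sum_append, List.map_map, List.map_map]
    have hfun : (ggp ∘ fun dd : H.Dart => dd.symm.toProd) = (ggp ∘ SimpleGraph.Dart.toProd) := by
      funext dd
      show (y dd.symm.toProd.1 - y dd.symm.toProd.2)^2 = (y dd.toProd.1 - y dd.toProd.2)^2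
      rw [SimpleGraph.Dart.symm_toProd, Prod.fst_swap, Prod.snd_swap]
      ring
    rw [hfun]
    have hsplitsum : (CD.map (ggp ∘ SimpleGraph.Dart.toProd)).sum = T1 + T2 + T3 := by
      rw [hCD, List.map_append, List.map_append, List.sum_append, List.sum_append,
        hT1, hT2, hT3]
      rfl
    rw [hsplitsum]
    ring
  have hLQ : (Lfull.map ggp).sum ≤ Q2 := by
    have h1 : (Lfull.map ggp).sum = ∑ pr ∈ Lfull.toFinset, ggp pr :=
      (List.sum_toFinset ggp hfullnodup).symm
    have h2 : Lfull.toFinset ⊆ PP := fun pr hpr => hmemPP pr (List.mem_toFinset.mp hpr)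
    have h3 : ∑ pr ∈ Lfull.toFinset, ggp pr ≤ ∑ p ∈ PP, ggp p :=
      Finset.sum_le_sum_of_subset_of_nonneg h2 (fun p _ _ => sq_nonneg _)
    rw [h1]
    exact h3
  have hTQ : T1 + T2 + T3 ≤ (1/2) * Q2 := by
    have := hLQ
    rw [hLsum] at this
    linarith
  -- nonnegativity of the partial sums
  have hTnn : ∀ (u' v' : V) (W : H.Walk u' v'),
      0 ≤ (W.darts.map (fun dd => (y dd.toProd.1 - y dd.toProd.2)^2)).sum := by
    intro u' v' W
    apply List.sum_nonneg
    intro a ha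
    obtain ⟨dd, _, rfl⟩ := List.mem_map.mp ha
    positivity
  -- Cauchy-Schwarz along the three paths
  have cs1 : (y w - y c)^2 ≤ (P1.length : ℝ) * T1 := walk_cs' y P1
  have cs2 : (y c - y α)^2 ≤ (P2.length : ℝ) * T2 := walk_cs' y P2
  have cs3 : (y c - y β)^2 ≤ (R.length : ℝ) * T3 := walk_cs' y R
  -- length constraints
  have hlensum : P1.length + P2.length = Pw.length := by
    have h := congrArg SimpleGraph.Walk.length (SimpleGraph.Walk.take_spec Pw hcP)
    rwa [SimpleGraph.Walk.length_append] at h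
  have hjp : P1.length + P2.length ≤ H.diam := by
    rw [hlensum, hPwlen]
    exact hdist_le w α
  have hjq : P1.length + R.length ≤ H.diam := by
    rw [hj, hRlen]
    calc H.dist w c + H.dist c β = H.dist w β := hceq
      _ ≤ H.diam := hdist_le w β
  have hpq1 : 1 ≤ P2.length + R.length := by
    by_contra hcon
    push_neg at hcon
    have hp2 : P2.length = 0 := by omega
    have hr0 : R.length = 0 := by omega
    have hcα : c = α := SimpleGraph.Walk.eq_of_length_eq_zero hp2
    have hcβ : c = β := SimpleGraph.Walk.eq_of_length_eq_zero hr0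
    exact hαβ (hcα ▸ hcβ)
  have halg : (y w)^2 ≤ (H.diam : ℝ) * (T1 + (T2 + (y α)^2) + (T3 + (y β)^2)) :=
    alg' H.diam P1.length P2.length R.length T1 T2 T3 (y α) (y β) (y c) (y w)
      (hTnn _ _ P1) (hTnn _ _ P2) (hTnn _ _ R) cs1 cs2 cs3 hjp hjq hpq1
  -- final assembly
  have hD0 : (0:ℝ) < (H.diam : ℝ) := by exact_mod_cast hDpos
  have hfin1 : (y w)^2 ≤ (H.diam : ℝ) * ((Δ:ℝ) - μ) := by
    calc (y w)^2 ≤ (H.diam : ℝ) * (T1 + (T2 + (y α)^2) + (T3 + (y β)^2)) := halg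
      _ ≤ (H.diam : ℝ) * ((Δ:ℝ) - μ) := by
          apply mul_le_mul_of_nonneg_left _ (le_of_lt hD0)
          linarith only [master, hTQ]
  constructor
  · exact part1
  · rw [gt_iff_lt, div_lt_iff₀ (mul_pos hn0 hD0)]
    have h5 : (n:ℝ) * (1/(n:ℝ)) = 1 := by field_simp
    have h6 : (n:ℝ) * (1/(n:ℝ)) < (n:ℝ) * (y w)^2 := by
      exact mul_lt_mul_of_pos_left hXgt hn0
    have h7 : (n:ℝ) * (y w)^2 ≤ (n:ℝ) * ((H.diam : ℝ) * ((Δ:ℝ) - μ)) :=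
      mul_le_mul_of_nonneg_left hfin1 (le_of_lt hn0)
    have h10 : 1 < (n:ℝ) * ((H.diam : ℝ) * ((Δ:ℝ) - μ)) := by
      linarith only [h5, h6, h7]
    calc (1:ℝ) < (n:ℝ) * ((H.diam : ℝ) * ((Δ:ℝ) - μ)) := h10
      _ = ((Δ:ℝ) - μ) * ((n:ℝ) * (H.diam : ℝ)) := by ring
end

section
/- Let G be a connected irregular graph on n vertices with maximum degree Δ and exactly one vertex w of degree less than Δ, with principal eigenvector x, and largest eigenvalue λ₁. Then Δ − λ₁ = (Δ − d_w) x_w / (Σᵢ xᵢ), where d_w is the degree of w. -/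
open SimpleGraph Finset Matrix

/-- If the connected irregular graph `G` has exactly one vertex `w` of degree less than the
maximum degree `Δ`, then `Δ − λ₁ = (Δ − d_w)·x_w / (∑ᵢ xᵢ)`, `x` the principal eigenvector. -/
theorem stmt6 {V : Type*} [Fintype V] [DecidableEq V]
    (G : SimpleGraph V) [DecidableRel G.Adj]
    (hconn : G.Connected)
    (hirr : ¬ ∃ d, G.IsRegularOfDegree d)
    (Δ : ℕ) (hΔ : ∀ i, G.degree i ≤ Δ) (hΔex : ∃ i, G.degree i = Δ)
    (w : V) (hw : G.degree w < Δ) (huniq : ∀ i, G.degree i < Δ → i = w)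
    (μ : ℝ) (x : V → ℝ)
    (hx : (G.adjMatrix ℝ).mulVec x = μ • x)
    (hxpos : ∀ i, 0 < x i)
    (hxnorm : ∑ i, x i ^ 2 = 1)
    (hμmax : ∀ ν : ℝ, Module.End.HasEigenvalue (Matrix.toLin' (G.adjMatrix ℝ)) ν → ν ≤ μ) :
    (Δ : ℝ) - μ = ((Δ : ℝ) - G.degree w) * x w / (∑ i, x i) := by
  have hS : 0 < ∑ i, x i := Finset.sum_pos (fun i _ => hxpos i) ⟨w, mem_univ w⟩
  -- sum both sides of the eigenvalue equation
  have key : ∑ i, ∑ j, (G.adjMatrix ℝ) i j * x j = μ * ∑ i, x i := by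
    have := congrArg (fun v => ∑ i, v i) hx
    simpa [Matrix.mulVec, dotProduct, Finset.mul_sum] using this
  have deg_sum : ∑ i, ∑ j, (G.adjMatrix ℝ) i j * x j = ∑ j, (G.degree j : ℝ) * x j := by
    rw [Finset.sum_comm]
    refine Finset.sum_congr rfl fun j _ => ?_
    rw [← Finset.sum_mul]
    congr 1
    have : ∀ i, (G.adjMatrix ℝ) i j = (G.adjMatrix ℝ) j i := fun i => by
      simp [SimpleGraph.adjMatrix_apply, adj_comm]
    simp only [this]
    simp [SimpleGraph.adjMatrix_apply, Finset.sum_boole, SimpleGraph.degree,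
      SimpleGraph.neighborFinset_eq_filter]
  have hdeg : ∀ i, i ≠ w → G.degree i = Δ := by
    intro i hi
    rcases lt_or_eq_of_le (hΔ i) with h | h
    · exact absurd (huniq i h) hi
    · exact h
  have degsum_eq : (Δ : ℝ) * (∑ j, x j) - ∑ j, (G.degree j : ℝ) * x j
      = ((Δ : ℝ) - G.degree w) * x w := by
    rw [Finset.mul_sum, ← Finset.sum_sub_distrib]
    rw [Finset.sum_eq_single w]
    · ring
    · intro i _ hi
      rw [hdeg i hi]; ring
    · simp
  have main : ((Δ : ℝ) - μ) * ∑ i, x i = ((Δ : ℝ) - G.degree w) * x w := by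
    have hk := key
    rw [deg_sum] at hk
    linarith [degsum_eq]
  field_simp
  linarith [main]
end

section
/- Let G be a connected graph with maximum degree Δ, largest adjacency eigenvalue λ₁, and principal eigenvector x. Let s be a vertex of degree Δ maximizing x, and suppose some neighbor j of s satisfies x_j < 1/√n where n is the number of vertices. Then Δ − λ₁ > 1 − 1/(x_s √n). -/
open SimpleGraph Finset Matrix

/-- If `s` is a vertex of maximum degree `Δ` maximizing the principal eigenvector `x` of a
connected graph `G` and a neighbor `j` of `s` has `x_j < 1/√n`, then
`Δ − λ₁ > 1 − 1/(x_s √n)`. -/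
theorem stmt7 {V : Type*} [Fintype V] [DecidableEq V]
    (G : SimpleGraph V) [DecidableRel G.Adj]
    (hconn : G.Connected)
    (Δ : ℕ) (hΔ : ∀ i, G.degree i ≤ Δ)
    (μ : ℝ) (x : V → ℝ)
    (hx : (G.adjMatrix ℝ).mulVec x = μ • x)
    (hxpos : ∀ i, 0 < x i)
    (hxnorm : ∑ i, x i ^ 2 = 1)
    (hμmax : ∀ ν : ℝ, Module.End.HasEigenvalue (Matrix.toLin' (G.adjMatrix ℝ)) ν → ν ≤ μ)
    (s : V) (hsdeg : G.degree s = Δ) (hs : ∀ i, x i ≤ x s)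
    (j : V) (hj : G.Adj s j) (hjsmall : x j < 1 / Real.sqrt (Fintype.card V)) :
    (Δ : ℝ) - μ > 1 - 1 / (x s * Real.sqrt (Fintype.card V)) := by
  have hxs : 0 < x s := hxpos s
  have hcard : 0 < (Fintype.card V : ℝ) := by
    have : Nonempty V := ⟨s⟩
    exact_mod_cast Fintype.card_pos
  have hsq : 0 < Real.sqrt (Fintype.card V) := Real.sqrt_pos.2 hcard
  have hΔ1 : 1 ≤ Δ := by
    have h0 : 0 < G.degree s := by
      rw [G.degree_pos_iff_exists_adj]; exact ⟨j, hj⟩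
    omega
  -- eigen-equation at s
  have key : μ * x s = ∑ i ∈ G.neighborFinset s, x i := by
    have h := congrFun hx s
    rw [adjMatrix_mulVec_apply] at h
    simpa using h.symm
  have hjmem : j ∈ G.neighborFinset s := by
    rw [mem_neighborFinset]; exact hj
  have hsplit : ∑ i ∈ G.neighborFinset s, x i
      = x j + ∑ i ∈ (G.neighborFinset s).erase j, x i := by
    rw [add_comm, Finset.sum_erase_add _ _ hjmem]
  have hcarderase : ((G.neighborFinset s).erase j).card = Δ - 1 := by
    rw [Finset.card_erase_of_mem hjmem, card_neighborFinset_eq_degree, hsdeg]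
  have hrest : ∑ i ∈ (G.neighborFinset s).erase j, x i ≤ ((Δ : ℝ) - 1) * x s := by
    calc ∑ i ∈ (G.neighborFinset s).erase j, x i
        ≤ ∑ _i ∈ (G.neighborFinset s).erase j, x s :=
          Finset.sum_le_sum fun i _ => hs i
      _ = ((Δ - 1 : ℕ) : ℝ) * x s := by rw [Finset.sum_const, hcarderase, nsmul_eq_mul]
      _ = ((Δ : ℝ) - 1) * x s := by
          congr 1; push_cast [Nat.cast_sub hΔ1]; ring
  have hmain : μ * x s < ((Δ : ℝ) - 1) * x s + 1 / Real.sqrt (Fintype.card V) := by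
    rw [key, hsplit]
    have := hjsmall
    linarith
  have hx_ne : x s ≠ 0 := ne_of_gt hxs
  have hsq_ne : Real.sqrt (Fintype.card V) ≠ 0 := ne_of_gt hsq
  rw [gt_iff_lt, ← mul_lt_mul_iff_left₀ hxs]
  have h1 : (1 - 1 / (x s * Real.sqrt (Fintype.card V))) * x s
      = x s - 1 / Real.sqrt (Fintype.card V) := by
    field_simp
  rw [h1]
  nlinarith [hmain]
end

section
/- Let G be a connected graph on n vertices with maximum degree Δ, largest adjacency eigenvalue λ₁, principal eigenvector x, a vertex s of degree Δ maximizing x, and a vertex w at distance 2 from s minimizing x. Then λ₁² x_s ≤ (Δ² − 1) x_s + x_w. -/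
open SimpleGraph Finset Matrix

/-- If `s` is a vertex of maximum degree `Δ` maximizing the principal eigenvector `x` of a
connected graph `G`, and `w` minimizes `x` and is at distance exactly `2` from `s`, then
`λ₁² x_s ≤ (Δ² − 1) x_s + x_w`. -/
theorem stmt8 {V : Type*} [Fintype V] [DecidableEq V]
    (G : SimpleGraph V) [DecidableRel G.Adj]
    (hconn : G.Connected)
    (Δ : ℕ) (hΔ : ∀ i, G.degree i ≤ Δ)
    (μ : ℝ) (x : V → ℝ)
    (hx : (G.adjMatrix ℝ).mulVec x = μ • x)
    (hxpos : ∀ i, 0 < x i)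
    (hxnorm : ∑ i, x i ^ 2 = 1)
    (hμmax : ∀ ν : ℝ, Module.End.HasEigenvalue (Matrix.toLin' (G.adjMatrix ℝ)) ν → ν ≤ μ)
    (s : V) (hsdeg : G.degree s = Δ) (hs : ∀ i, x i ≤ x s)
    (w : V) (hw : ∀ i, x w ≤ x i) (hdist : G.dist s w = 2) :
    μ ^ 2 * x s ≤ ((Δ : ℝ) ^ 2 - 1) * x s + x w := by
  -- eigen-equation pointwise
  have h1 : ∀ i, ∑ j ∈ G.neighborFinset i, x j = μ * x i := by
    intro i
    have := congrFun hx i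
    rwa [adjMatrix_mulVec_apply, Pi.smul_apply, smul_eq_mul] at this
  -- middle vertex
  obtain ⟨p, hp⟩ := hconn.exists_walk_length_eq_dist s w
  rw [hdist] at hp
  set t0 := p.getVert 1 with ht0
  have ha : G.Adj s t0 := by
    have := p.adj_getVert_succ (i := 0) (by omega)
    simpa using this
  have hb : G.Adj t0 w := by
    have h2 : p.getVert 2 = w := by rw [← hp]; exact p.getVert_length
    have := p.adj_getVert_succ (i := 1) (by omega)
    rwa [h2] at this
  have hxs : (0:ℝ) ≤ x s := (hxpos s).le
  have ht0mem : t0 ∈ G.neighborFinset s := (mem_neighborFinset _ _ _).mpr ha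
  have hwmem : w ∈ G.neighborFinset t0 := (mem_neighborFinset _ _ _).mpr hb
  have hdeg1 : 1 ≤ G.degree t0 := by
    rw [← card_neighborFinset_eq_degree]
    exact Finset.card_pos.mpr ⟨w, hwmem⟩
  have hΔ1 : 1 ≤ Δ := le_trans hdeg1 (hΔ t0)
  have key : μ ^ 2 * x s = ∑ t ∈ G.neighborFinset s, ∑ u ∈ G.neighborFinset t, x u := by
    calc μ ^ 2 * x s = μ * (μ * x s) := by ring
      _ = μ * ∑ t ∈ G.neighborFinset s, x t := by rw [h1]
      _ = ∑ t ∈ G.neighborFinset s, μ * x t := by rw [Finset.mul_sum]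
      _ = ∑ t ∈ G.neighborFinset s, ∑ u ∈ G.neighborFinset t, x u :=
        Finset.sum_congr rfl fun t _ => (h1 t).symm
  have hin : ∀ t, ∑ u ∈ G.neighborFinset t, x u ≤ (G.degree t : ℝ) * x s := by
    intro t
    have := Finset.sum_le_card_nsmul (G.neighborFinset t) x (x s) (fun u _ => hs u)
    simpa [card_neighborFinset_eq_degree, nsmul_eq_mul] using this
  have hin0 : ∑ u ∈ G.neighborFinset t0, x u ≤ x w + ((Δ : ℝ) - 1) * x s := by
    rw [← Finset.add_sum_erase _ _ hwmem]
    refine add_le_add le_rfl ?_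
    have h := Finset.sum_le_card_nsmul ((G.neighborFinset t0).erase w) x (x s)
      (fun u _ => hs u)
    rw [Finset.card_erase_of_mem hwmem, card_neighborFinset_eq_degree, nsmul_eq_mul] at h
    refine le_trans h (mul_le_mul_of_nonneg_right ?_ hxs)
    rw [Nat.cast_sub hdeg1]
    simp only [Nat.cast_one]
    have := hΔ t0
    exact sub_le_sub_right (by exact_mod_cast this) 1
  have herase : ∑ t ∈ (G.neighborFinset s).erase t0, ∑ u ∈ G.neighborFinset t, x u
      ≤ ((Δ : ℝ) - 1) * ((Δ : ℝ) * x s) := by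
    have h := Finset.sum_le_card_nsmul ((G.neighborFinset s).erase t0)
      (fun t => ∑ u ∈ G.neighborFinset t, x u) ((Δ : ℝ) * x s)
      (fun t _ => le_trans (hin t) (mul_le_mul_of_nonneg_right (by exact_mod_cast hΔ t) hxs))
    rw [Finset.card_erase_of_mem ht0mem, card_neighborFinset_eq_degree, hsdeg,
      nsmul_eq_mul, Nat.cast_sub hΔ1, Nat.cast_one] at h
    exact h
  calc μ ^ 2 * x s = ∑ t ∈ G.neighborFinset s, ∑ u ∈ G.neighborFinset t, x u := key
    _ = (∑ u ∈ G.neighborFinset t0, x u)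
        + ∑ t ∈ (G.neighborFinset s).erase t0, ∑ u ∈ G.neighborFinset t, x u :=
      (Finset.add_sum_erase _ _ ht0mem).symm
    _ ≤ (x w + ((Δ : ℝ) - 1) * x s) + ((Δ : ℝ) - 1) * ((Δ : ℝ) * x s) :=
      add_le_add hin0 herase
    _ = ((Δ : ℝ) ^ 2 - 1) * x s + x w := by ring
end

section
/- Let G' be a Δ-regular graph on n vertices and let e be an edge of G' such that G = G' \ e is connected. If D is the diameter of G, then D < 3(n+2)/Δ. -/
open SimpleGraph Finset Matrix

lemma myLengthDrop {V : Type*} {G : SimpleGraph V} {u v : V} (p : G.Walk u v) (n : ℕ) :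
    (p.drop n).length = p.length - n := by
  induction p generalizing n with
  | nil => simp [SimpleGraph.Walk.drop]
  | cons h q ih =>
    cases n with
    | zero => simp [SimpleGraph.Walk.drop]
    | succ n => simp [SimpleGraph.Walk.drop, ih]

lemma myDistUpper {V : Type*} {G : SimpleGraph V} (hc : G.Connected) {u v : V}
    (p : G.Walk u v) : ∀ m, G.dist u (p.getVert m) ≤ m := by
  intro m
  induction m with
  | zero => simp
  | succ m ih =>
    by_cases h : m < p.length
    · have hadj := p.adj_getVert_succ h
      calc G.dist u (p.getVert (m+1)) ≤ G.dist u (p.getVert m) + G.dist (p.getVert m) (p.getVert (m+1)) :=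
            hc.dist_triangle
        _ ≤ m + 1 := by
            have : G.dist (p.getVert m) (p.getVert (m+1)) = 1 := (dist_eq_one_iff_adj).mpr hadj
            omega
    · have h1 : p.getVert (m+1) = v := p.getVert_of_length_le (by omega)
      have h2 : p.getVert m = v := p.getVert_of_length_le (by omega)
      rw [h1, ← h2]; omega

/-- along a geodesic walk, dist u (getVert m) = m -/
lemma myGeodesic {V : Type*} {G : SimpleGraph V} (hc : G.Connected) {u v : V}
    (p : G.Walk u v) (hp : p.length = G.dist u v) {m : ℕ} (hm : m ≤ p.length) :
    G.dist u (p.getVert m) = m := by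
  have hub := myDistUpper hc p m
  have hback : G.dist (p.getVert m) v ≤ p.length - m := by
    have := SimpleGraph.dist_le (p.drop m)
    rwa [myLengthDrop] at this
  have htri : G.dist u v ≤ G.dist u (p.getVert m) + G.dist (p.getVert m) v := hc.dist_triangle
  omega

/-- If `G` is a connected graph obtained from a connected `Δ`-regular graph `G'` on `n`
vertices by deleting one edge `e`, and `D` is the diameter of `G`, then `D < 3(n+2)/Δ`. -/
theorem stmt10 {V : Type*} [Fintype V] [DecidableEq V]
    (G' : SimpleGraph V) [DecidableRel G'.Adj]
    (hconn' : G'.Connected)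
    (Δ : ℕ) (hreg : G'.IsRegularOfDegree Δ)
    (e : Sym2 V) (he : e ∈ G'.edgeSet)
    (G : SimpleGraph V) (hG : G = G'.deleteEdges {e})
    (hconn : G.Connected) :
    (G.diam : ℝ) < 3 * ((Fintype.card V : ℝ) + 2) / Δ := by
  classical
  induction e using Sym2.ind with
  | _ a b =>
  have hab : G'.Adj a b := he
  have hΔpos : 0 < Δ := by
    have := hreg a
    have hb : b ∈ G'.neighborFinset a := by simpa using hab
    have : 0 < G'.degree a := Finset.card_pos.mpr ⟨b, hb⟩
    omega
  have hadjG : ∀ x y, G.Adj x y ↔ G'.Adj x y ∧ s(x, y) ≠ s(a, b) := by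
    intro x y
    subst hG
    simp [SimpleGraph.deleteEdges_adj]
  -- degree lower bound
  haveI : DecidableRel G.Adj := fun x y => decidable_of_iff _ (hadjG x y).symm
  have hdeg : ∀ x : V, Δ ≤ G.degree x + 1 := by
    intro x
    have hsub : G'.neighborFinset x \ {if x = a then b else a} ⊆ G.neighborFinset x := by
      intro w hw
      simp only [Finset.mem_sdiff, SimpleGraph.mem_neighborFinset, Finset.mem_singleton] at hw
      obtain ⟨hadj, hwne⟩ := hw
      rw [SimpleGraph.mem_neighborFinset, hadjG]
      refine ⟨hadj, fun hcontra => ?_⟩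
      rcases Sym2.eq_iff.mp hcontra with ⟨hx, hwb⟩ | ⟨hx, hwa⟩
      · subst hx; simp at hwne; exact hwne hwb
      · apply hwne
        rw [hwa]
        by_cases hxa : x = a
        · exfalso; exact (G'.irrefl (hx ▸ hxa ▸ hab.symm))
        · simp [hxa]
    have hcard : (G'.neighborFinset x).card - 1 ≤ (G'.neighborFinset x \ {if x = a then b else a}).card := by
      have := Finset.le_card_sdiff ({if x = a then b else a} : Finset V) (G'.neighborFinset x)
      simpa using this
    have h1 : (G'.neighborFinset x).card = Δ := hreg x
    have h2 := Finset.card_le_card hsub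
    unfold SimpleGraph.degree
    omega
  -- main argument
  set n := Fintype.card V with hn
  set D := G.diam with hD
  haveI : Nonempty V := ⟨a⟩
  obtain ⟨u, v, huv⟩ := G.exists_dist_eq_diam
  obtain ⟨p, hp⟩ := hconn.exists_walk_length_eq_dist u v
  have hplen : p.length = D := by rw [hp, huv]
  set k := D / 3 + 1 with hk
  set f : ℕ → V := fun i => p.getVert (3 * i) with hf
  have hdistf : ∀ i < k, G.dist u (f i) = 3 * i := by
    intro i hi
    exact myGeodesic hconn p (by omega) (by simp only [hplen]; omega)
  set N : ℕ → Finset V := fun i => insert (f i) (G.neighborFinset (f i)) with hN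
  have hNcard : ∀ i, Δ ≤ (N i).card := by
    intro i
    have hni : f i ∉ G.neighborFinset (f i) := by
      rw [SimpleGraph.mem_neighborFinset]; exact G.irrefl
    have : (N i).card = G.degree (f i) + 1 := by
      show (insert (f i) (G.neighborFinset (f i))).card = _
      rw [Finset.card_insert_of_notMem hni, SimpleGraph.degree]
    rw [this]; exact hdeg _
  have hmem : ∀ i w, w ∈ N i → G.dist (f i) w ≤ 1 := by
    intro i w hw
    rcases Finset.mem_insert.mp hw with h | h
    · rw [h, SimpleGraph.dist_self]; omega
    · exact le_of_eq (dist_eq_one_iff_adj.mpr ((SimpleGraph.mem_neighborFinset G (f i) w).mp h))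
  have hdisj : ∀ i ∈ Finset.range k, ∀ j ∈ Finset.range k, i ≠ j → Disjoint (N i) (N j) := by
    intro i hi j hj hij
    rw [Finset.disjoint_left]
    intro w hwi hwj
    have h1 := hmem i w hwi
    have h2 := hmem j w hwj
    have hdij : G.dist (f i) (f j) ≤ 2 := by
      calc G.dist (f i) (f j) ≤ G.dist (f i) w + G.dist w (f j) := hconn.dist_triangle
        _ ≤ 2 := by rw [SimpleGraph.dist_comm (u := w)]; omega
    have hdi := hdistf i (Finset.mem_range.mp hi)
    have hdj := hdistf j (Finset.mem_range.mp hj)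
    have htri1 : G.dist u (f j) ≤ G.dist u (f i) + G.dist (f i) (f j) := hconn.dist_triangle
    have htri2 : G.dist u (f i) ≤ G.dist u (f j) + G.dist (f j) (f i) := hconn.dist_triangle
    rw [SimpleGraph.dist_comm (u := f j)] at htri2
    omega
  have hcount : k * Δ ≤ n := by
    calc k * Δ = ∑ _i ∈ Finset.range k, Δ := by rw [Finset.sum_const, Finset.card_range]; ring
      _ ≤ ∑ i ∈ Finset.range k, (N i).card := Finset.sum_le_sum fun i _ => hNcard i
      _ = ((Finset.range k).biUnion N).card := (Finset.card_biUnion hdisj).symm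
      _ ≤ (Finset.univ : Finset V).card := Finset.card_le_card (Finset.subset_univ _)
      _ = n := rfl
  -- final arithmetic
  have hDlt : D * Δ < 3 * (n + 2) := by
    have h1 : D < 3 * k := by omega
    have h2 : D * Δ < 3 * k * Δ := by
      exact (Nat.mul_lt_mul_right hΔpos).mpr h1
    have h3 : 3 * k * Δ ≤ 3 * n := by
      calc 3 * k * Δ = 3 * (k * Δ) := by ring
        _ ≤ 3 * n := by omega
    omega
  rw [lt_div_iff₀ (by exact_mod_cast hΔpos)]
  calc (D : ℝ) * Δ = ((D * Δ : ℕ) : ℝ) := by push_cast; ring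
    _ < ((3 * (n + 2) : ℕ) : ℝ) := by exact_mod_cast hDlt
    _ = 3 * ((n : ℝ) + 2) := by push_cast; ring
end

section
/- Let G be a connected irregular graph on n vertices with maximum degree Δ, diameter D, adjacency eigenvalue λ₁ and principal eigenvector x. Suppose u and v are two distinct vertices of degree less than Δ, s is a vertex of degree Δ with x_s = max x, and d(u, s) ≤ D − 1. Then Δ − λ₁ ≥ x_u² + Σ along a shortest u–s path of (consecutive entry differences)² ≥ x_s²/D > 1/(nD). -/
open SimpleGraph Finset Matrix


lemma list_sq_sum (l : List ℝ) : l.sum ^ 2 ≤ l.length * (l.map (· ^ 2)).sum := by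
  induction l with
  | nil => simp
  | cons a l ih =>
    simp only [List.sum_cons, List.length_cons, List.map_cons, Nat.cast_add, Nat.cast_one]
    have hq : (0:ℝ) ≤ (l.map (· ^ 2)).sum := by
      apply List.sum_nonneg; intro y hy
      obtain ⟨z, _, rfl⟩ := List.mem_map.mp hy
      positivity
    have hn : (0:ℝ) ≤ (l.length : ℝ) := by positivity
    rcases eq_or_ne l [] with rfl | hne
    · simp
    · have hn' : (0:ℝ) < (l.length : ℝ) := by
        exact_mod_cast List.length_pos_iff.mpr hne
      have h1 : (l.length:ℝ) * (a + l.sum)^2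
          ≤ (l.length:ℝ) * (((l.length:ℝ)+1) * (a^2 + (l.map (· ^ 2)).sum)) := by
        nlinarith [sq_nonneg (l.sum - (l.length : ℝ) * a),
          mul_le_mul_of_nonneg_left ih (by positivity : (0:ℝ) ≤ (l.length : ℝ) + 1)]
      exact le_of_mul_le_mul_left h1 hn'

lemma zip_eq_darts {V : Type*} {G : SimpleGraph V} {a b : V} (p : G.Walk a b) :
    p.support.zip p.support.tail = p.darts.map (fun d => (d.fst, d.snd)) := by
  induction p with
  | nil => simp
  | cons h q ih =>
    rw [Walk.support_cons, Walk.darts_cons, List.map_cons, List.tail_cons]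
    rw [q.support_eq_cons]
    rw [q.support_eq_cons] at ih
    rw [List.zip_cons_cons]
    exact congrArg (List.cons _) ih

lemma telescope {V : Type*} {G : SimpleGraph V} (x : V → ℝ) {a b : V} (p : G.Walk a b) :
    (p.darts.map (fun d => x d.snd - x d.fst)).sum = x b - x a := by
  induction p with
  | nil => simp
  | cons h q ih => simp [ih]

/-- Chain of inequalities in the main proof: if `u, v` are distinct vertices of degree `< Δ`,
`s` has degree `Δ` and maximizes the principal eigenvector `x`, and `d(u,s) ≤ D − 1`, then
for any shortest `u`–`s` path `P`,
`Δ − λ₁ ≥ x_u² + ∑ (consecutive differences)² ≥ x_s²/D > 1/(nD)`. -/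
theorem stmt19 {V : Type*} [Fintype V] [DecidableEq V]
    (G : SimpleGraph V) [DecidableRel G.Adj]
    (hconn : G.Connected)
    (hirr : ¬ ∃ d, G.IsRegularOfDegree d)
    (Δ : ℕ) (hΔ : ∀ i, G.degree i ≤ Δ)
    (μ : ℝ) (x : V → ℝ)
    (hx : (G.adjMatrix ℝ).mulVec x = μ • x)
    (hxpos : ∀ i, 0 < x i)
    (hxnorm : ∑ i, x i ^ 2 = 1)
    (hμmax : ∀ ν : ℝ, Module.End.HasEigenvalue (Matrix.toLin' (G.adjMatrix ℝ)) ν → ν ≤ μ)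
    (u v s : V) (huv : u ≠ v)
    (hu : G.degree u < Δ) (hv : G.degree v < Δ)
    (hsdeg : G.degree s = Δ) (hs : ∀ i, x i ≤ x s)
    (hdist : G.dist u s ≤ G.diam - 1)
    (P : G.Walk u s) (hPlen : P.length = G.dist u s) :
    (Δ : ℝ) - μ ≥
        x u ^ 2 + ((P.support.zip P.support.tail).map fun p => (x p.1 - x p.2) ^ 2).sum ∧
    x u ^ 2 + ((P.support.zip P.support.tail).map fun p => (x p.1 - x p.2) ^ 2).sum ≥
        x s ^ 2 / G.diam ∧
    x s ^ 2 / G.diam > 1 / (Fintype.card V * G.diam) := by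
  classical
  have hAx : ∀ i, ∑ j ∈ G.neighborFinset i, x j = μ * x i := by
    intro i
    have h := congrFun hx i
    simpa using h
  haveI : Nontrivial V := ⟨u, v, huv⟩
  haveI : Nonempty V := ⟨u⟩
  -- diameter is positive
  have hD0 : G.diam ≠ 0 := by
    intro h
    rcases SimpleGraph.diam_eq_zero.mp h with h' | h'
    · obtain ⟨a, b, hab⟩ := SimpleGraph.exists_edist_eq_ediam_of_finite (G := G)
      rw [h'] at hab
      exact SimpleGraph.edist_ne_top_iff_reachable.mpr (hconn a b) hab
    · exact huv (Subsingleton.elim u v)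
  have hDpos : 0 < G.diam := Nat.pos_of_ne_zero hD0
  have hDR : (0:ℝ) < (G.diam : ℝ) := by exact_mod_cast hDpos
  have hnR : (0:ℝ) < (Fintype.card V : ℝ) := by
    exact_mod_cast Fintype.card_pos
  have hPpath : P.IsPath := P.isPath_of_length_eq_dist hPlen
  -- rewrite path sum via darts
  have hzip : (((P.support.zip P.support.tail).map fun p => (x p.1 - x p.2) ^ 2).sum)
      = (P.darts.map (fun d => (x d.fst - x d.snd) ^ 2)).sum := by
    rw [zip_eq_darts, List.map_map]
    rfl
  set S : ℝ := (P.darts.map (fun d => (x d.fst - x d.snd) ^ 2)).sum with hSdef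
  have hS0 : 0 ≤ S := by
    apply List.sum_nonneg
    intro y hy
    obtain ⟨d, _, rfl⟩ := List.mem_map.mp hy
    positivity
  rw [hzip]
  -- Part 3 core : 1/n < x s ^ 2
  have hxs2 : 1 / (Fintype.card V : ℝ) < x s ^ 2 := by
    by_contra h
    push_neg at h
    have h0 : ∀ j ∈ Finset.univ, (0:ℝ) ≤ x s ^ 2 - x j ^ 2 := by
      intro j _
      nlinarith [hs j, (hxpos j).le]
    have hxsum : ∑ i, (x s ^ 2 - x i ^ 2) ≤ 0 := by
      rw [Finset.sum_sub_distrib, hxnorm, Finset.sum_const, Finset.card_univ,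
        nsmul_eq_mul]
      have h' : x s ^ 2 * (Fintype.card V : ℝ) ≤ 1 := (le_div_iff₀ hnR).mp h
      linarith
    have hall : ∀ i, x i = x s := by
      intro i
      have hz := (Finset.sum_eq_zero_iff_of_nonneg h0).mp
        (le_antisymm hxsum (Finset.sum_nonneg h0)) i (Finset.mem_univ i)
      nlinarith [hs i, hxpos i, hxpos s]
    have hreg : ∀ i, (G.degree i : ℝ) = μ := by
      intro i
      have h1 := hAx i
      rw [Finset.sum_congr rfl (fun j _ => hall j), Finset.sum_const,
        SimpleGraph.card_neighborFinset_eq_degree, nsmul_eq_mul, hall i] at h1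
      exact mul_right_cancel₀ (hxpos s).ne' h1
    refine hirr ⟨G.degree s, fun i => ?_⟩
    have : (G.degree i : ℝ) = (G.degree s : ℝ) := by rw [hreg i, hreg s]
    exact_mod_cast this
  refine ⟨?_, ?_, ?_⟩
  · -- Part 1 : Δ - μ ≥ x u ^ 2 + S
    -- spectral identity
    have hQ : ∑ i, ∑ j ∈ G.neighborFinset i, (x j * x i) = μ := by
      have h1 : ∀ i, ∑ j ∈ G.neighborFinset i, (x j * x i) = μ * x i ^ 2 := by
        intro i
        rw [← Finset.sum_mul, hAx]
        ring
      rw [Finset.sum_congr rfl (fun i _ => h1 i), ← Finset.mul_sum, hxnorm, mul_one]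
    have hswap : ∀ f : V → V → ℝ,
        ∑ i, ∑ j ∈ G.neighborFinset i, f i j = ∑ j, ∑ i ∈ G.neighborFinset j, f i j := by
      intro f
      simp only [SimpleGraph.neighborFinset_eq_filter, Finset.sum_filter]
      rw [Finset.sum_comm]
      refine Finset.sum_congr rfl fun j _ => Finset.sum_congr rfl fun i _ => ?_
      exact if_congr (G.adj_comm i j) rfl rfl
    have hdx : ∑ i, ∑ j ∈ G.neighborFinset i, x i ^ 2
        = ∑ i, (G.degree i : ℝ) * x i ^ 2 := by
      refine Finset.sum_congr rfl fun i _ => ?_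
      rw [Finset.sum_const, SimpleGraph.card_neighborFinset_eq_degree, nsmul_eq_mul]
    have hxx : ∑ i, ∑ j ∈ G.neighborFinset i, x j ^ 2
        = ∑ i, (G.degree i : ℝ) * x i ^ 2 := by
      rw [hswap (fun _ j => x j ^ 2)]
      refine Finset.sum_congr rfl fun j _ => ?_
      rw [Finset.sum_const, SimpleGraph.card_neighborFinset_eq_degree, nsmul_eq_mul]
    have hE2 : ∑ i, ∑ j ∈ G.neighborFinset i, (x i - x j) ^ 2
        = 2 * (∑ i, (G.degree i : ℝ) * x i ^ 2) - 2 * μ := by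
      have h1 : ∀ i, ∑ j ∈ G.neighborFinset i, (x i - x j) ^ 2
          = (∑ j ∈ G.neighborFinset i, x i ^ 2) + (∑ j ∈ G.neighborFinset i, x j ^ 2)
            - 2 * ∑ j ∈ G.neighborFinset i, (x j * x i) := by
        intro i
        rw [← Finset.sum_add_distrib, Finset.mul_sum, ← Finset.sum_sub_distrib]
        refine Finset.sum_congr rfl fun j _ => by ring
      rw [Finset.sum_congr rfl (fun i _ => h1 i)]
      rw [Finset.sum_sub_distrib, Finset.sum_add_distrib, hdx, hxx, ← Finset.mul_sum, hQ]
      ring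
    have key : (Δ:ℝ) - μ = (∑ i, ((Δ:ℝ) - G.degree i) * x i ^ 2)
        + (1/2) * ∑ i, ∑ j ∈ G.neighborFinset i, (x i - x j) ^ 2 := by
      have e1 : ∑ i, ((Δ:ℝ) - G.degree i) * x i ^ 2
          = Δ - ∑ i, (G.degree i : ℝ) * x i ^ 2 := by
        simp_rw [sub_mul]
        rw [Finset.sum_sub_distrib, ← Finset.mul_sum, hxnorm, mul_one]
      rw [e1, hE2]
      ring
    -- first summand bound
    have h1a : x u ^ 2 ≤ ∑ i, ((Δ:ℝ) - G.degree i) * x i ^ 2 := by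
      have hnn : ∀ i ∈ Finset.univ, (0:ℝ) ≤ ((Δ:ℝ) - G.degree i) * x i ^ 2 := by
        intro i _
        have : (G.degree i : ℝ) ≤ Δ := by exact_mod_cast hΔ i
        have := sq_nonneg (x i)
        nlinarith
      have hle := Finset.single_le_sum hnn (Finset.mem_univ u)
      have hu' : (1:ℝ) ≤ (Δ:ℝ) - G.degree u := by
        have h2 : (G.degree u : ℝ) + 1 ≤ Δ := by exact_mod_cast hu
        linarith
      nlinarith [sq_nonneg (x u)]
    -- second summand bound : 2 * S ≤ E2
    have hdartsnd : P.darts.Nodup :=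
      SimpleGraph.Walk.darts_nodup_of_support_nodup hPpath.support_nodup
    have hedges : P.edges.Nodup := hPpath.isTrail.edges_nodup
    have hinj1 : Function.Injective (fun d : G.Dart => (d.fst, d.snd)) := by
      intro d e h
      exact SimpleGraph.Dart.ext _ _ (by
        cases d; cases e; simpa using h)
    have hinj2 : Function.Injective (fun d : G.Dart => (d.snd, d.fst)) := by
      intro d e h
      exact SimpleGraph.Dart.ext _ _ (by
        cases d; cases e
        simp only [Prod.mk.injEq] at h
        exact Prod.ext h.2 h.1)
    set L : List (V × V) :=
      P.darts.map (fun d => (d.fst, d.snd)) ++ P.darts.map (fun d => (d.snd, d.fst))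
      with hLdef
    have hnodupL : L.Nodup := by
      rw [List.nodup_append]
      refine ⟨hdartsnd.map hinj1, hdartsnd.map hinj2, ?_⟩
      intro p hp1 p' hp2 hpp'
      subst hpp'
      obtain ⟨d, hd, rfl⟩ := List.mem_map.mp hp1
      obtain ⟨e, he, hpe⟩ := List.mem_map.mp hp2
      simp only [Prod.mk.injEq] at hpe
      have hedge : d.edge = e.edge := by
        rw [SimpleGraph.Dart.edge, SimpleGraph.Dart.edge]
        have h1 : d.toProd.1 = e.toProd.2 := hpe.1.symm
        have h2 : d.toProd.2 = e.toProd.1 := hpe.2.symm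
        rw [Sym2.eq_swap (a := e.toProd.1)]
        rw [← h1, ← h2]
      have hmapnodup : (P.darts.map SimpleGraph.Dart.edge).Nodup := hedges
      have hde : d = e := List.inj_on_of_nodup_map hmapnodup hd he hedge
      rw [hde] at hpe
      exact e.adj.ne hpe.1.symm
    have hLsum : (L.map (fun p : V × V => (x p.1 - x p.2) ^ 2)).sum = 2 * S := by
      rw [hLdef, List.map_append, List.sum_append, List.map_map, List.map_map]
      have h2 : P.darts.map ((fun p : V × V => (x p.1 - x p.2) ^ 2) ∘ fun d => (d.snd, d.fst))
          = P.darts.map (fun d => (x d.fst - x d.snd) ^ 2) := by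
        refine List.map_congr_left fun d _ => ?_
        simp only [Function.comp_apply]
        ring
      have h1 : P.darts.map ((fun p : V × V => (x p.1 - x p.2) ^ 2) ∘ fun d => (d.fst, d.snd))
          = P.darts.map (fun d => (x d.fst - x d.snd) ^ 2) := by
        refine List.map_congr_left fun d _ => ?_
        simp only [Function.comp_apply]
      rw [h1, h2, hSdef]
      ring
    have hfilter : ∑ p ∈ Finset.univ.filter (fun p : V × V => G.Adj p.1 p.2),
        (x p.1 - x p.2) ^ 2 = ∑ i, ∑ j ∈ G.neighborFinset i, (x i - x j) ^ 2 := by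
      rw [Finset.sum_filter, Fintype.sum_prod_type]
      refine Finset.sum_congr rfl fun i _ => ?_
      rw [SimpleGraph.neighborFinset_eq_filter, Finset.sum_filter]
    have h2S : 2 * S ≤ ∑ i, ∑ j ∈ G.neighborFinset i, (x i - x j) ^ 2 := by
      rw [← hLsum, ← List.sum_toFinset _ hnodupL, ← hfilter]
      apply Finset.sum_le_sum_of_subset_of_nonneg
      · intro p hp
        rw [List.mem_toFinset, hLdef, List.mem_append] at hp
        rcases hp with hp | hp
        · obtain ⟨d, _, rfl⟩ := List.mem_map.mp hp
          exact Finset.mem_filter.mpr ⟨Finset.mem_univ _, d.adj⟩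
        · obtain ⟨d, _, rfl⟩ := List.mem_map.mp hp
          exact Finset.mem_filter.mpr ⟨Finset.mem_univ _, d.adj.symm⟩
      · intro p _ _
        positivity
    rw [ge_iff_le, key]
    linarith
  · -- Part 2 : Cauchy–Schwarz along the path
    set l : List ℝ := x u :: P.darts.map (fun d => x d.snd - x d.fst) with hldef
    have hlsum : l.sum = x s := by
      rw [hldef, List.sum_cons, telescope x P]
      ring
    have hllen : l.length = P.length + 1 := by
      simp [hldef]
    have hlenle : P.length + 1 ≤ G.diam := by
      rw [hPlen]
      omega
    have hmap : (l.map (· ^ 2)).sum = x u ^ 2 + S := by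
      rw [hldef, List.map_cons, List.sum_cons, List.map_map, hSdef]
      congr 1
      refine congrArg List.sum (List.map_congr_left fun d _ => ?_)
      simp only [Function.comp_apply]
      ring
    rw [ge_iff_le, div_le_iff₀ hDR]
    calc x s ^ 2 = l.sum ^ 2 := by rw [hlsum]
      _ ≤ (l.length : ℝ) * (l.map (· ^ 2)).sum := list_sq_sum l
      _ ≤ (x u ^ 2 + S) * G.diam := by
          rw [hmap, mul_comm]
          apply mul_le_mul_of_nonneg_left _ (by positivity)
          rw [hllen]
          exact_mod_cast hlenle
  · -- Part 3
    rw [show (1:ℝ) / (Fintype.card V * G.diam) = (1 / Fintype.card V) / G.diam by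
      rw [div_div]]
    exact (div_lt_div_iff_of_pos_right hDR).mpr hxs2
end
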